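/- arXiv:2306.15520 — 2 statements merged into one kernel-verified Lean document; each statement's English description precedes it below -/
import Mathlib

section
/- In the free group F_n, the counting function f = Σ_{s ∈ S̄ \ {a_1, a_1^{-1}}} p_s - Σ p_{s_1 s_2} (where the second sum runs over reduced two-letter words s_1 s_2 with s_1 ≠ a_1 and s_2 ≠ a_1^{-1}) is a bounded function on F_n. -/
open List Finset

/-- Number of occurrences of `w` as a contiguous subword of `v`. -/
def occ {α : Type*} [DecidableEq α] (w v : List α) : ℕ :=
  ((List.range (v.length + 1 - w.length)).filter (fun i => decide (w <+: v.drop i))).length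

/-- Elementary counting function, with the convention `p_ε(v) = |v|`. -/
def cnt {α : Type*} [DecidableEq α] (w v : List α) : ℚ :=
  if w = [] then v.length else occ w v

/-- The inverse of a letter of `S̄`: letters are pairs (generator, sign). -/
def invL {n : ℕ} (a : Fin n × Bool) : Fin n × Bool := (a.1, !a.2)

/-- The inverse of a (reduced) word. -/
def invW {n : ℕ} (w : List (Fin n × Bool)) : List (Fin n × Bool) := (w.map invL).reverse

def redB {n : ℕ} : List (Fin n × Bool) → Bool
  | a :: b :: t => decide (b ≠ invL a) && redB (b :: t)
  | _ => true

/-- A word over `S̄` is reduced if no letter is followed by its inverse. -/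
def Red {n : ℕ} (w : List (Fin n × Bool)) : Prop := redB w = true

instance {n : ℕ} : DecidablePred (Red (n := n)) := fun _ => instDecidableEqBool _ _

/-- Left extension relation `l_w = p_w - Σ_{s : sw reduced} p_{sw}`. -/
def lgrp {n : ℕ} (w v : List (Fin n × Bool)) : ℚ :=
  cnt w v - ∑ s ∈ Finset.univ.filter (fun s => Red (s :: w)), cnt (s :: w) v

/-- Right extension relation `r_w = p_w - Σ_{s : ws reduced} p_{ws}`. -/
def rgrp {n : ℕ} (w v : List (Fin n × Bool)) : ℚ :=
  cnt w v - ∑ s ∈ Finset.univ.filter (fun s => Red (w ++ [s])), cnt (w ++ [s]) v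

/-- The map `σ₁` sending a function on F_n to `f - f ∘ (·⁻¹)`; on counting functions
it sends `p_w` to the Brooks quasimorphism `φ_w = p_w - p_{w⁻¹}`. -/
def sig1 {n : ℕ} (f : List (Fin n × Bool) → ℚ) : List (Fin n × Bool) → ℚ :=
  fun v => f v - f (invW v)

lemma occ_eq_countP {α : Type*} [DecidableEq α] (w v : List α) (hw : w ≠ []) :
    occ w v = (List.range (v.length + 1)).countP (fun i => decide (w <+: v.drop i)) := by
  have hw1 : 1 ≤ w.length := List.length_pos_iff.2 hw
  have hN : v.length + 1 = (v.length + 1 - w.length) + (v.length + 1 - (v.length + 1 - w.length)) := by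
    omega
  rw [occ, ← List.countP_eq_length_filter]
  conv_rhs => rw [hN, List.range_add, List.countP_append]
  have hz : (List.map (fun i => v.length + 1 - w.length + i)
      (List.range (v.length + 1 - (v.length + 1 - w.length)))).countP
      (fun i => decide (w <+: v.drop i)) = 0 := by
    rw [List.countP_eq_zero]
    intro j hj
    simp only [List.mem_map, List.mem_range] at hj
    obtain ⟨i, hi, rfl⟩ := hj
    simp only [decide_eq_true_eq]
    intro hpre
    have hl := hpre.length_le
    rw [List.length_drop] at hl
    omega
  simp [hz]

lemma occ_cons {α : Type*} [DecidableEq α] (w : List α) (hw : w ≠ []) (x : α) (v : List α) :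
    occ w (x :: v) = occ w v + (if w <+: (x :: v) then 1 else 0) := by
  rw [occ_eq_countP _ _ hw, occ_eq_countP _ _ hw]
  show (List.range (v.length + 1 + 1)).countP _ = _
  rw [List.range_succ_eq_map, List.countP_cons, List.countP_map]
  congr 1
  simp

lemma occ_single_cons {α : Type*} [DecidableEq α] (s x : α) (v : List α) :
    occ [s] (x :: v) = occ [s] v + if s = x then 1 else 0 := by
  rw [occ_cons _ (by simp) x v]
  congr 1
  simp [List.cons_prefix_cons]

lemma occ_pair_cons {α : Type*} [DecidableEq α] (s t x y : α) (v : List α) :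
    occ [s, t] (x :: y :: v) = occ [s, t] (y :: v) + if (s, t) = (x, y) then 1 else 0 := by
  rw [occ_cons _ (by simp) x (y :: v)]
  congr 1
  simp [List.cons_prefix_cons, Prod.ext_iff, and_assoc]

lemma invL_ne {n : ℕ} (a : Fin n × Bool) : invL a ≠ a := by
  simp [invL, Prod.ext_iff]

lemma arith {n : ℕ} (a1 x y : Fin n × Bool) (hxy : y ≠ invL x) :
    (if (x ≠ a1 ∧ x ≠ invL a1) then (1:ℚ) else 0)
      - (if (x ≠ a1 ∧ y ≠ invL a1 ∧ y ≠ invL x) then (1:ℚ) else 0)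
    = (if y = invL a1 then (1:ℚ) else 0) - (if x = invL a1 then (1:ℚ) else 0) := by
  have hne := invL_ne a1
  have hinvinv : invL (invL a1) = a1 := by simp [invL]
  by_cases hx1 : x = a1 <;> by_cases hx2 : x = invL a1 <;> by_cases hy : y = invL a1 <;>
    simp_all

lemma base_arith {n : ℕ} (a1 x : Fin n × Bool) :
    (if (x ≠ a1 ∧ x ≠ invL a1) then (1:ℚ) else 0)
    = 1 - (if x = invL a1 then (1:ℚ) else 0) - (if x = a1 then (1:ℚ) else 0) := by
  have hne := invL_ne a1
  by_cases hx1 : x = a1 <;> by_cases hx2 : x = invL a1 <;> simp_all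

lemma key {n : ℕ} (a1 : Fin n × Bool) :
    ∀ v : List (Fin n × Bool), Red v →
    (∑ s ∈ Finset.univ.filter (fun s => s ≠ a1 ∧ s ≠ invL a1), (occ [s] v : ℚ))
      - ∑ p ∈ Finset.univ.filter (fun p : (Fin n × Bool) × (Fin n × Bool) =>
          p.1 ≠ a1 ∧ p.2 ≠ invL a1 ∧ p.2 ≠ invL p.1), (occ [p.1, p.2] v : ℚ)
    = (if v = [] then 0 else 1) - (if v.head? = some (invL a1) then 1 else 0)
      - (if v.getLast? = some a1 then 1 else 0) := by
  intro v
  induction v with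
  | nil => intro _; simp [occ]
  | cons x v ih =>
    intro hv
    match v with
    | [] =>
      have h0 : ∀ s : Fin n × Bool, (occ [s] [x] : ℚ) = if s = x then 1 else 0 := by
        intro s; rw [occ_single_cons]; simp [occ]
      have h1 : ∀ p : (Fin n × Bool) × (Fin n × Bool), (occ [p.1, p.2] [x] : ℚ) = 0 := by
        intro p; simp [occ]
      rw [Finset.sum_congr rfl (fun s _ => h0 s), Finset.sum_congr rfl (fun p _ => h1 p),
        Finset.sum_ite_eq' _ x (fun _ => (1:ℚ))]
      simp only [Finset.mem_filter, Finset.mem_univ, true_and, Finset.sum_const_zero,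
        List.head?_cons, List.getLast?_singleton, Option.some.injEq]
      rw [base_arith]
      norm_num
    | y :: t =>
      have h1 : y ≠ invL x ∧ Red (y :: t) := by
        have h2 : redB (x :: y :: t) = true := hv
        rw [redB] at h2
        simpa [Red] using h2
      have hS1 : (∑ s ∈ Finset.univ.filter (fun s => s ≠ a1 ∧ s ≠ invL a1),
            (occ [s] (x :: y :: t) : ℚ))
          = (∑ s ∈ Finset.univ.filter (fun s => s ≠ a1 ∧ s ≠ invL a1), (occ [s] (y :: t) : ℚ))
            + (if (x ≠ a1 ∧ x ≠ invL a1) then 1 else 0) := by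
        simp only [occ_single_cons, Nat.cast_add, Nat.cast_ite, Nat.cast_one, Nat.cast_zero,
          Finset.sum_add_distrib, Finset.sum_ite_eq', Finset.mem_filter, Finset.mem_univ, true_and]
      have hS2 : (∑ p ∈ Finset.univ.filter (fun p : (Fin n × Bool) × (Fin n × Bool) =>
            p.1 ≠ a1 ∧ p.2 ≠ invL a1 ∧ p.2 ≠ invL p.1), (occ [p.1, p.2] (x :: y :: t) : ℚ))
          = (∑ p ∈ Finset.univ.filter (fun p : (Fin n × Bool) × (Fin n × Bool) =>
              p.1 ≠ a1 ∧ p.2 ≠ invL a1 ∧ p.2 ≠ invL p.1), (occ [p.1, p.2] (y :: t) : ℚ))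
            + (if (x ≠ a1 ∧ y ≠ invL a1 ∧ y ≠ invL x) then 1 else 0) := by
        simp only [occ_pair_cons, Nat.cast_add, Nat.cast_ite, Nat.cast_one, Nat.cast_zero,
          Finset.sum_add_distrib, Prod.mk.eta, Finset.sum_ite_eq', Finset.mem_filter,
          Finset.mem_univ, true_and]
      rw [hS1, hS2]
      have hIH := ih h1.2
      have hAR := arith a1 x y h1.1
      simp only [List.head?_cons, Option.some.injEq, List.getLast?_cons_cons,
        if_neg (List.cons_ne_nil _ _), reduceIte] at hIH ⊢
      linarith [hIH, hAR]


/-- The counting function f = Σ_{s ∈ S̄ \ {a₁,a₁⁻¹}} p_s - Σ_{s₁≠a₁, s₂≠a₁⁻¹, s₁s₂ reduced} p_{s₁s₂}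
is a bounded function on F_n. -/
theorem stmt_6 (n : ℕ) (hn : 2 ≤ n) :
    ∃ C : ℚ, ∀ v : List (Fin n × Bool), Red v →
      |(∑ s ∈ Finset.univ.filter (fun s : Fin n × Bool =>
            s ≠ ((⟨0, by omega⟩ : Fin n), true) ∧ s ≠ ((⟨0, by omega⟩ : Fin n), false)),
          (occ [s] v : ℚ)) -
        ∑ p ∈ Finset.univ.filter (fun p : (Fin n × Bool) × (Fin n × Bool) =>
            p.1 ≠ ((⟨0, by omega⟩ : Fin n), true) ∧ p.2 ≠ ((⟨0, by omega⟩ : Fin n), false) ∧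
            p.2 ≠ invL p.1),
          (occ [p.1, p.2] v : ℚ)| ≤ C := by
  refine ⟨1, fun v hv => ?_⟩
  have hkey := key (n := n) ((⟨0, by omega⟩ : Fin n), true) v hv
  have h2 : (∑ s ∈ Finset.univ.filter (fun s : Fin n × Bool =>
            s ≠ ((⟨0, by omega⟩ : Fin n), true) ∧ s ≠ ((⟨0, by omega⟩ : Fin n), false)),
          (occ [s] v : ℚ)) -
        ∑ p ∈ Finset.univ.filter (fun p : (Fin n × Bool) × (Fin n × Bool) =>
            p.1 ≠ ((⟨0, by omega⟩ : Fin n), true) ∧ p.2 ≠ ((⟨0, by omega⟩ : Fin n), false) ∧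
            p.2 ≠ invL p.1),
          (occ [p.1, p.2] v : ℚ)
      = (if v = [] then 0 else 1)
        - (if v.head? = some (invL ((⟨0, by omega⟩ : Fin n), true)) then 1 else 0)
        - (if v.getLast? = some ((⟨0, by omega⟩ : Fin n), true) then 1 else 0) := hkey
  rw [h2]
  clear hkey hv
  split_ifs <;> simp_all
end

section
/- For any reduced word w in F_n, the function se_w = l_w - r_{w^{-1}} maps, under the linear map p_u ↦ φ_u = p_u - p_{u^{-1}}, to 2(l_w - r_{w^{-1}}), which is a bounded function on F_n; hence se_w lies in the kernel K_Br of the composition C(F_n) → Br(F_n) → Br(F_n)/∼. -/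
/-!
On a reduced word `v`, an occurrence of `w` that is not a prefix of `v` has a left neighbour `s`,
and `s :: w` is then reduced, so counting occurrences by their left neighbour gives
`l_w(v) = 1` if `w` is a nonempty prefix of `v` and `0` otherwise; in particular `|l_w| ≤ 1`.
Inverting words reverses and inverts occurrences, so `l_w(v⁻¹) = r_{w⁻¹}(v)` and
`r_{w⁻¹}(v⁻¹) = l_w(v)`: thus `σ₁` multiplies `se_w` by `2`, and both `se_w` and its image are
bounded on reduced words.
-/

open List Finset

section Occurrences

variable {α : Type*}

lemma prefix_drop_reverse_iff {w v : List α} {i : ℕ} (hi : i + w.length ≤ v.length) :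
    w <+: v.reverse.drop i ↔ w.reverse <+: v.drop (v.length - w.length - i) := by
  rw [List.drop_reverse, ← List.reverse_suffix, List.reverse_reverse, List.suffix_iff_eq_drop,
    List.prefix_iff_eq_take, List.drop_take, List.length_take, List.length_reverse,
    min_eq_left (by omega), show v.length - i - (v.length - i - w.length) = w.length by omega,
    Nat.sub_right_comm]

variable [DecidableEq α]

lemma occ_eq_card_filter (w v : List α) :
    occ w v = ((Finset.range (v.length + 1 - w.length)).filter (fun i => w <+: v.drop i)).card := by
  simp [occ, Finset.card, Finset.filter, Finset.range, Multiset.range, Multiset.filter_coe]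

lemma occ_reverse (w v : List α) : occ w v.reverse = occ w.reverse v := by
  rw [occ_eq_card_filter, occ_eq_card_filter, List.length_reverse, List.length_reverse]
  apply Finset.card_nbij' (fun i => v.length - w.length - i) (fun j => v.length - w.length - j)
  all_goals intro i hi; simp only [Finset.coe_filter, Finset.mem_range, Set.mem_ofPred_eq] at hi ⊢
  · exact ⟨by omega, (prefix_drop_reverse_iff (by omega)).mp hi.2⟩
  · refine ⟨by omega, (prefix_drop_reverse_iff (by omega)).mpr ?_⟩
    rw [show v.length - w.length - (v.length - w.length - i) = i by omega]
    exact hi.2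
  all_goals omega

lemma occ_map {β : Type*} [DecidableEq β] {f : α → β} (hf : Function.Injective f) (w v : List α) :
    occ (w.map f) (v.map f) = occ w v := by
  simp only [occ, List.length_map, ← List.map_drop, List.prefix_map_iff_of_injective hf]

lemma occ_of_length_lt {w v : List α} (h : v.length < w.length) : occ w v = 0 := by
  simp [occ, show v.length + 1 - w.length = 0 by omega]

lemma occ_nil (v : List α) : occ [] v = v.length + 1 := by
  simp [occ]

lemma occ_cons_right (w : List α) (a : α) (v : List α) :
    occ w (a :: v) = (if w <+: a :: v then 1 else 0) + occ w v := by
  rcases lt_or_ge (v.length + 1) w.length with h | h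
  · have hw : ¬ w <+: a :: v := fun hp => by simpa using (hp.length_le.trans_lt h).ne
    rw [occ_of_length_lt (by simpa using h), occ_of_length_lt (by omega), if_neg hw]
  · simp only [occ, List.length_cons]
    rw [show v.length + 1 + 1 - w.length = (v.length + 1 - w.length) + 1 by omega,
      List.range_succ_eq_map, ← List.countP_eq_length_filter, ← List.countP_eq_length_filter,
      List.countP_cons, List.countP_map]
    by_cases hp : w <+: a :: v <;> simp [hp, Function.comp_def, add_comm]

lemma isInfix_of_occ_ne_zero {w v : List α} (h : occ w v ≠ 0) : w <:+: v := by
  obtain ⟨i, hi⟩ := Finset.card_ne_zero.mp (occ_eq_card_filter w v ▸ h)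
  exact (Finset.mem_filter.mp hi).2.isInfix.trans (List.drop_suffix i v).isInfix

lemma occ_eq_ite_prefix_add_sum_cons [Fintype α] (w v : List α) :
    occ w v = (if w <+: v then 1 else 0) + ∑ s : α, occ (s :: w) v := by
  induction v with
  | nil =>
    rcases eq_or_ne w [] with rfl | hw
    · simp [occ_nil, occ_of_length_lt]
    · simp [occ_of_length_lt, List.length_pos_iff.mpr hw, hw]
  | cons a v ih =>
    simp only [occ_cons_right, Finset.sum_add_distrib, List.cons_prefix_cons]
    rw [ih]
    by_cases hp : w <+: v <;> simp [hp]

end Occurrences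

section Words

variable {n : ℕ}

lemma invL_invL (a : Fin n × Bool) : invL (invL a) = a := by
  simp [invL]

lemma invL_injective : Function.Injective (invL (n := n)) :=
  Function.LeftInverse.injective invL_invL

lemma invW_invW (w : List (Fin n × Bool)) : invW (invW w) = w := by
  simp [invW, List.map_reverse, Function.comp_def, invL_invL]

lemma invW_cons (s : Fin n × Bool) (w : List (Fin n × Bool)) :
    invW (s :: w) = invW w ++ [invL s] := by
  simp [invW]

lemma invW_append_singleton (w : List (Fin n × Bool)) (s : Fin n × Bool) :
    invW (w ++ [s]) = invL s :: invW w := by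
  simp [invW]

lemma length_invW (w : List (Fin n × Bool)) : (invW w).length = w.length := by
  simp [invW]

lemma invW_eq_nil {w : List (Fin n × Bool)} : invW w = [] ↔ w = [] := by
  simp [invW]

lemma occ_invW (u v : List (Fin n × Bool)) : occ u (invW v) = occ (invW u) v := by
  have hmap : (invW u).map invL = u.reverse := by
    simp [invW, List.map_reverse, Function.comp_def, invL_invL]
  rw [invW, occ_reverse, ← hmap, occ_map invL_injective]

lemma cnt_invW (u v : List (Fin n × Bool)) : cnt u (invW v) = cnt (invW u) v := by
  simp only [cnt, invW_eq_nil, occ_invW, length_invW]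

lemma red_iff_isChain (w : List (Fin n × Bool)) :
    Red w ↔ w.IsChain (fun a b => b ≠ invL a) := by
  induction w with
  | nil => simp [Red, redB]
  | cons a t ih =>
    cases t with
    | nil => simp [Red, redB]
    | cons b t => simp [List.isChain_cons_cons, ← ih, Red, redB]

lemma red_invW_iff {w : List (Fin n × Bool)} : Red (invW w) ↔ Red w := by
  simp only [red_iff_isChain, invW, List.isChain_reverse, List.isChain_map]
  exact List.IsChain.iff fun a b => by rw [invL_invL, ne_comm]

lemma occ_eq_zero_of_not_red {u v : List (Fin n × Bool)} (hu : ¬ Red u) (hv : Red v) :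
    occ u v = 0 := by
  by_contra h
  rw [red_iff_isChain] at hu hv
  exact hu (hv.infix (isInfix_of_occ_ne_zero h))

lemma occ_eq_ite_prefix_add_sum_red_cons (w : List (Fin n × Bool)) {v : List (Fin n × Bool)}
    (hv : Red v) :
    occ w v = (if w <+: v then 1 else 0) +
      ∑ s ∈ Finset.univ.filter (fun s => Red (s :: w)), occ (s :: w) v := by
  rw [Finset.sum_filter_of_ne fun s _ h => not_not.mp (mt (occ_eq_zero_of_not_red · hv) h)]
  exact occ_eq_ite_prefix_add_sum_cons w v

lemma lgrp_eq_ite (w : List (Fin n × Bool)) {v : List (Fin n × Bool)} (hv : Red v) :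
    lgrp w v = if w ≠ [] ∧ w <+: v then 1 else 0 := by
  have hsplit := occ_eq_ite_prefix_add_sum_red_cons w hv
  have hsum : ∑ s ∈ Finset.univ.filter (fun s => Red (s :: w)), cnt (s :: w) v =
      ((∑ s ∈ Finset.univ.filter (fun s => Red (s :: w)), occ (s :: w) v : ℕ) : ℚ) := by
    push_cast
    exact Finset.sum_congr rfl fun s _ => by simp [cnt]
  rcases eq_or_ne w [] with rfl | hw
  · rw [occ_nil, if_pos List.nil_prefix, add_comm, add_right_inj] at hsplit
    rw [lgrp, hsum, ← hsplit]
    simp [cnt]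
  · rw [lgrp, hsum, cnt, if_neg hw, hsplit]
    split_ifs <;> simp_all

lemma abs_lgrp_le_one (w : List (Fin n × Bool)) {v : List (Fin n × Bool)} (hv : Red v) :
    |lgrp w v| ≤ 1 := by
  rw [lgrp_eq_ite w hv]
  split_ifs <;> norm_num

lemma lgrp_invW (w v : List (Fin n × Bool)) : lgrp w (invW v) = rgrp (invW w) v := by
  rw [lgrp, rgrp, cnt_invW]
  congr 1
  refine Finset.sum_nbij' invL invL ?_ ?_ (fun s _ => invL_invL s) (fun s _ => invL_invL s) ?_
  · intro s hs
    simpa [← red_invW_iff (w := s :: w), invW_cons] using hs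
  · intro s hs
    simpa [← red_invW_iff (w := invW w ++ [s]), invW_append_singleton, invW_invW] using hs
  · intro s _
    rw [cnt_invW, invW_cons]

lemma abs_rgrp_le_one (w : List (Fin n × Bool)) {v : List (Fin n × Bool)} (hv : Red v) :
    |rgrp w v| ≤ 1 := by
  rw [← invW_invW w, ← lgrp_invW]
  exact abs_lgrp_le_one _ (red_invW_iff.mpr hv)

/-- The space `C(F_n)` of counting functions. -/
abbrev countingSpan (n : ℕ) : Submodule ℚ (List (Fin n × Bool) → ℚ) :=
  Submodule.span ℚ {g | ∃ u, Red u ∧ g = cnt u}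

lemma cnt_mem_countingSpan {u : List (Fin n × Bool)} (hu : Red u) : cnt u ∈ countingSpan n :=
  Submodule.subset_span ⟨u, hu, rfl⟩

lemma cnt_sub_sum_cnt_mem_countingSpan {w : List (Fin n × Bool)} (hw : Red w)
    (S : Finset (Fin n × Bool)) (f : Fin n × Bool → List (Fin n × Bool))
    (hf : ∀ s ∈ S, Red (f s)) :
    (fun v => cnt w v - ∑ s ∈ S, cnt (f s) v) ∈ countingSpan n := by
  have hsum : (fun v => ∑ s ∈ S, cnt (f s) v) = ∑ s ∈ S, cnt (f s) := by
    ext v; simp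
  simp only [← Pi.sub_def, hsum]
  exact sub_mem (cnt_mem_countingSpan hw)
    (Submodule.sum_mem _ fun s hs => cnt_mem_countingSpan (hf s hs))

lemma lgrp_mem_countingSpan {w : List (Fin n × Bool)} (hw : Red w) : lgrp w ∈ countingSpan n :=
  cnt_sub_sum_cnt_mem_countingSpan hw _ _ fun _ hs => (Finset.mem_filter.mp hs).2

lemma rgrp_mem_countingSpan {w : List (Fin n × Bool)} (hw : Red w) : rgrp w ∈ countingSpan n :=
  cnt_sub_sum_cnt_mem_countingSpan hw _ _ fun _ hs => (Finset.mem_filter.mp hs).2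

lemma sig1_lgrp_sub_rgrp_invW (w v : List (Fin n × Bool)) :
    sig1 (fun u => lgrp w u - rgrp (invW w) u) v = 2 * (lgrp w v - rgrp (invW w) v) := by
  have hr : rgrp (invW w) (invW v) = lgrp w v := by rw [← lgrp_invW, invW_invW]
  rw [sig1, lgrp_invW, hr]
  ring

end Words

theorem stmt_8_general (n : ℕ) (w : List (Fin n × Bool)) (hw : Red w) :
    (∀ v : List (Fin n × Bool), Red v →
      sig1 (fun u => lgrp w u - rgrp (invW w) u) v = 2 * (lgrp w v - rgrp (invW w) v)) ∧
    (∃ C : ℚ, ∀ v : List (Fin n × Bool), Red v →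
      |sig1 (fun u => lgrp w u - rgrp (invW w) u) v| ≤ C) ∧
    (fun u => lgrp w u - rgrp (invW w) u) ∈
      Submodule.span ℚ {g : List (Fin n × Bool) → ℚ | ∃ u, Red u ∧ g = cnt u} := by
  refine ⟨fun v _ => sig1_lgrp_sub_rgrp_invW w v, ⟨4, fun v hv => ?_⟩,
    sub_mem (lgrp_mem_countingSpan hw) (rgrp_mem_countingSpan (red_invW_iff.mpr hw))⟩
  rw [sig1_lgrp_sub_rgrp_invW, abs_mul, abs_two]
  linarith [abs_sub (lgrp w v) (rgrp (invW w) v), abs_lgrp_le_one w hv, abs_rgrp_le_one (invW w) hv]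

/-- For any reduced word w, the symmetrized extension relation se_w = l_w - r_{w⁻¹}
is mapped by σ₁ to 2(l_w - r_{w⁻¹}), which is bounded on F_n; moreover se_w is a
counting function, hence se_w lies in the kernel K_Br of σ = σ₂ ∘ σ₁. -/
theorem stmt_8 (n : ℕ) (hn : 2 ≤ n) (w : List (Fin n × Bool)) (hw : Red w) :
    (∀ v : List (Fin n × Bool), Red v →
      sig1 (fun u => lgrp w u - rgrp (invW w) u) v = 2 * (lgrp w v - rgrp (invW w) v)) ∧
    (∃ C : ℚ, ∀ v : List (Fin n × Bool), Red v →
      |sig1 (fun u => lgrp w u - rgrp (invW w) u) v| ≤ C) ∧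
    (fun u => lgrp w u - rgrp (invW w) u) ∈
      Submodule.span ℚ {g : List (Fin n × Bool) → ℚ | ∃ u, Red u ∧ g = cnt u} :=
  stmt_8_general n w hw
end
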